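/- The map F : C^2 → C^4 given by F(x,y) = (x, y^2, x·y^3, x·y + y^3) is injective. -/
import Mathlib

/-- The map `F : ℂ² → ℂ⁴`, `F(x,y) = (x, y², x·y³, x·y + y³)`, is injective. -/
theorem stmt_5 :
    Function.Injective (fun p : ℂ × ℂ =>
      (p.1, p.2 ^ 2, p.1 * p.2 ^ 3, p.1 * p.2 + p.2 ^ 3)) := by
  rintro ⟨x, y⟩ ⟨x', y'⟩ h
  simp only [Prod.mk.injEq] at h ⊢
  obtain ⟨h1, h2, h3, h4⟩ := h
  subst h1
  refine ⟨rfl, ?_⟩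
  have hpm : y = y' ∨ y = -y' := by
    have : (y - y') * (y + y') = 0 := by ring_nf; linear_combination h2
    rcases mul_eq_zero.1 this with h | h
    · left; exact sub_eq_zero.1 h
    · right; linear_combination h
  rcases hpm with h | h
  · exact h
  · subst h
    -- now y = -y'
    have e4 : y' * (x + y' ^ 2) = 0 := by linear_combination (-1/2 : ℂ) * h4
    rcases mul_eq_zero.1 e4 with h0 | hx
    · simp [h0]
    · have hxv : x = -y' ^ 2 := by linear_combination hx
      have e3 : x * y' ^ 3 = 0 := by linear_combination (-1/2 : ℂ) * h3
      rw [hxv] at e3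
      have : y' ^ 5 = 0 := by linear_combination -e3
      have : y' = 0 := by
        exact pow_eq_zero_iff (by norm_num) |>.1 this
      simp [this]
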